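/- Let K be a simplicial set, (m_n)_{n∈ℕ} a coherent family of averaging operators, and (k_n)_{n∈ℕ} a family of maps assigning to each triple (σ, τ, τ′) ∈ K_n × Γ_n × Γ_n an (n+1)-chain k_n(σ, τ, τ′) of K × Γ with integer coefficients such that: for each n, sup over all triples of ‖k_n(σ, τ, τ′)‖₁ is finite; ∂ k_0(σ, τ, τ′) = (σ, τ) − (σ, τ′); and for n ≥ 1, ∂ k_n(σ, τ, τ′) = (σ, τ) − (σ, τ′) − Σ_{i=0}^{n} (−1)^i k_{n−1}(∂_i σ, ∂_i τ, ∂_i τ′). Define m_* : B^n(K × Γ) → B^n(K) by m_*(f)(σ) = m_n(τ ↦ f(σ, τ)), p* : B^n(K) → B^n(K × Γ) by p*(f)(σ, τ) = f(σ), h_0 = 0, and h_{n+1} : B^{n+1}(K × Γ) → B^n(K × Γ) by h_{n+1}(f)(σ, τ) = m_n(τ′ ↦ f(k_n(σ, τ, τ′))), where a bounded cochain evaluates on a chain by linearity. Then each h_{n+1} is a bounded linear operator, and the operators (h_n) form a cochain homotopy between p* ∘ m_* and the identity: for every n ∈ ℕ and every f ∈ B^n(K × Γ), f − p*(m_*(f))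 = h_{n+1}(∂* f) + ∂*(h_n(f)). -/

import Mathlib

open CategoryTheory Simplicial

set_option maxHeartbeats 1000000

/-- `Γ n`: the set of `n`-simplices of the Δ-set `Δ[∞]`,
i.e. strictly increasing maps `Fin (n+1) → ℕ`. -/
def Gma (n : ℕ) : Type := {f : Fin (n + 1) → ℕ // StrictMono f}

/-- The `i`-th face map `∂ᵢ : Γ (n+1) → Γ n`, precomposition with the unique strictly
increasing map `Fin (n+1) → Fin (n+2)` omitting `i`. -/
def faceG {n : ℕ} (i : Fin (n + 2)) (τ : Gma (n + 1)) : Gma n :=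
  ⟨fun j => τ.1 (i.succAbove j), τ.2.comp (Fin.strictMono_succAbove i)⟩

/-- A real-valued function is bounded. -/
def IsBdd {X : Type*} (f : X → ℝ) : Prop := ∃ C : ℝ, ∀ x, |f x| ≤ C

/-- The sup norm of a real valued function. -/
noncomputable def supN {X : Type*} (f : X → ℝ) : ℝ := ⨆ x, |f x|

/-- The space of bounded real-valued functions on `X`, as a submodule of `X → ℝ`. -/
def bddFns (X : Type*) : Submodule ℝ (X → ℝ) where
  carrier := {f | IsBdd f}
  add_mem' := by
    rintro f g ⟨C, hC⟩ ⟨D, hD⟩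
    exact ⟨C + D, fun x => (abs_add_le _ _).trans (add_le_add (hC x) (hD x))⟩
  zero_mem' := ⟨0, fun x => by simp⟩
  smul_mem' := by
    rintro r f ⟨C, hC⟩
    refine ⟨|r| * C, fun x => ?_⟩
    rw [Pi.smul_apply, smul_eq_mul, abs_mul]
    exact mul_le_mul_of_nonneg_left (hC x) (abs_nonneg r)

lemma const_mem_bddFns (X : Type*) (r : ℝ) : (fun _ : X => r) ∈ bddFns X :=
  ⟨|r|, fun _ => le_rfl⟩

lemma comp_mem_bddFns {X Y : Type*} {f : Y → ℝ} (hf : f ∈ bddFns Y) (g : X → Y) :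
    (fun x => f (g x)) ∈ bddFns X := by
  obtain ⟨C, hC⟩ := hf
  exact ⟨C, fun x => hC (g x)⟩

/-- The simplicial coboundary operator associated to a system of faces. -/
noncomputable def dgen {X Y : Type*} (N : ℕ) (face : Fin N → Y → X) :
    (X → ℝ) →ₗ[ℝ] (Y → ℝ) where
  toFun f := fun y => ∑ i : Fin N, (-1 : ℝ) ^ (i : ℕ) * f (face i y)
  map_add' f g := by
    funext y
    simp only [Pi.add_apply, mul_add]
    rw [Finset.sum_add_distrib]
  map_smul' r f := by
    funext y
    simp only [Pi.smul_apply, smul_eq_mul, RingHom.id_apply, Finset.mul_sum]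
    exact Finset.sum_congr rfl fun i _ => by ring

/-- The ℓ¹-norm of a chain with integer coefficients. -/
def l1 {X : Type*} (c : X →₀ ℤ) : ℤ := ∑ x ∈ c.support, |c x|

/-- Evaluation of a cochain on a chain, by linearity. -/
noncomputable def evalC {X : Type*} (f : X → ℝ) (c : X →₀ ℤ) : ℝ :=
  ∑ x ∈ c.support, ((c x : ℤ) : ℝ) * f x

/-- The `i`-th face map of the unraveling `K × Γ`. -/
def facePfun (K : SSet) {n : ℕ} (i : Fin (n + 2)) (x : K _⦋n + 1⦌ × Gma (n + 1)) :
    K _⦋n⦌ × Gma n :=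
  (K.δ i x.1, faceG i x.2)

/-- The boundary operator on integral chains of `K × Γ`. -/
noncomputable def bdryP (K : SSet) (n : ℕ) (c : (K _⦋n + 1⦌ × Gma (n + 1)) →₀ ℤ) :
    (K _⦋n⦌ × Gma n) →₀ ℤ :=
  ∑ i : Fin (n + 2), ((-1 : ℤ) ^ (i : ℕ)) • Finsupp.mapDomain (facePfun K i) c

/-- The coboundary operator on cochains of `K × Γ`: `∂*f(x) = ∑ᵢ (-1)ⁱ f(∂ᵢ x)`. -/
noncomputable def dF (K : SSet) (n : ℕ) (f : (K _⦋n⦌ × Gma n) → ℝ) :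
    (K _⦋n + 1⦌ × Gma (n + 1)) → ℝ :=
  fun x => ∑ i : Fin (n + 2), (-1 : ℝ) ^ (i : ℕ) * f (facePfun K i x)

/-- Extension of the averaging operator `m n` to all functions `Γ n → ℝ`
(by `0` on unbounded functions); on bounded functions it is just `m n`. -/
noncomputable def Mext (m : ∀ n : ℕ, ↥(bddFns (Gma n)) →ₗ[ℝ] ℝ) (n : ℕ)
    (g : Gma n → ℝ) : ℝ :=
  @dite _ (IsBdd g) (Classical.dec _) (fun h => m n ⟨g, h⟩) (fun _ => 0)

/-- `m_* : B^n(K × Γ) → B^n(K)`, averaging over the fibers: `m_*(f)(σ) = m_n (τ ↦ f (σ, τ))`. -/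
noncomputable def mstarF (m : ∀ n : ℕ, ↥(bddFns (Gma n)) →ₗ[ℝ] ℝ) (K : SSet) (n : ℕ)
    (f : (K _⦋n⦌ × Gma n) → ℝ) : K _⦋n⦌ → ℝ :=
  fun σ => Mext m n fun τ => f (σ, τ)

/-- `p* : B^n(K) → B^n(K × Γ)`, `p*(f)(σ, τ) = f σ`. -/
def pstarF (K : SSet) (n : ℕ) (f : K _⦋n⦌ → ℝ) : (K _⦋n⦌ × Gma n) → ℝ :=
  fun x => f x.1

/-- The homotopy operator `h_{n+1} : B^{n+1}(K × Γ) → B^n(K × Γ)`,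
`h_{n+1}(f)(σ, τ) = m_n (τ' ↦ f (k_n (σ, τ, τ')))`. -/
noncomputable def hF (m : ∀ n : ℕ, ↥(bddFns (Gma n)) →ₗ[ℝ] ℝ) (K : SSet)
    (k : ∀ n : ℕ, K _⦋n⦌ → Gma n → Gma n → ((K _⦋n + 1⦌ × Gma (n + 1)) →₀ ℤ)) (n : ℕ)
    (f : (K _⦋n + 1⦌ × Gma (n + 1)) → ℝ) : (K _⦋n⦌ × Gma n) → ℝ :=
  fun x => Mext m n fun τ' => evalC f (k n x.1 x.2 τ')

/-!
Evaluation of cochains on chains turns the coboundary into the boundary, `(∂*f)(c) = f(∂c)`.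
Applied to `c = k_n(σ, τ, τ')`, the boundary identity for `k` writes `(∂*f)(k_n(σ, τ, τ'))` as
`f(σ, τ) - f(σ, τ')` minus an alternating sum of `f(k_{n-1}(∂ᵢσ, ∂ᵢτ, ∂ᵢτ'))`. Averaging over
`τ'` with `m_n`, the term `f(σ, τ')` becomes `m_*f(σ)`, and by coherence of the averaging
operators the `i`-th face term becomes `h_n f(∂ᵢ(σ, τ))`, so that the sum is `∂*(h_n f)(σ, τ)`.
Boundedness of `h_{n+1}` comes from `|f(c)| ≤ ‖c‖₁ ‖f‖∞`, the uniform bound on `‖k_n‖₁` and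
`‖m_n‖ = 1`.
-/

section Cochains

variable {X Y : Type*}

lemma evalC_eq_linearCombination (f : X → ℝ) (c : X →₀ ℤ) :
    evalC f c = Finsupp.linearCombination ℤ f c := by
  simp [evalC, Finsupp.linearCombination_apply, Finsupp.sum, zsmul_eq_mul]

lemma evalC_single_one (f : X → ℝ) (x : X) : evalC f (Finsupp.single x 1) = f x := by
  simp [evalC_eq_linearCombination]

lemma evalC_sub (f : X → ℝ) (c d : X →₀ ℤ) : evalC f (c - d) = evalC f c - evalC f d := by
  simp [evalC_eq_linearCombination]

lemma evalC_zsmul (f : X → ℝ) (z : ℤ) (c : X →₀ ℤ) : evalC f (z • c) = z * evalC f c := by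
  simp [evalC_eq_linearCombination, zsmul_eq_mul]

lemma evalC_sum {ι : Type*} (f : X → ℝ) (s : Finset ι) (c : ι → X →₀ ℤ) :
    evalC f (∑ i ∈ s, c i) = ∑ i ∈ s, evalC f (c i) := by
  simp [evalC_eq_linearCombination]

lemma evalC_mapDomain (f : X → ℝ) (g : Y → X) (c : Y →₀ ℤ) :
    evalC f (Finsupp.mapDomain g c) = evalC (f ∘ g) c := by
  simp only [evalC_eq_linearCombination, Finsupp.linearCombination_mapDomain]

lemma evalC_add_left (f g : X → ℝ) (c : X →₀ ℤ) :
    evalC (f + g) c = evalC f c + evalC g c := by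
  simp [evalC, mul_add, Finset.sum_add_distrib]

lemma evalC_smul_left (r : ℝ) (f : X → ℝ) (c : X →₀ ℤ) : evalC (r • f) c = r * evalC f c := by
  simp [evalC, Finset.mul_sum, mul_left_comm]

lemma supN_nonneg (f : X → ℝ) : 0 ≤ supN f :=
  Real.iSup_nonneg fun _ => abs_nonneg _

lemma le_supN {f : X → ℝ} (hf : IsBdd f) (x : X) : |f x| ≤ supN f := by
  obtain ⟨C, hC⟩ := hf
  exact le_ciSup ⟨C, by rintro _ ⟨y, rfl⟩; exact hC y⟩ x

lemma supN_le {f : X → ℝ} {C : ℝ} (hC : 0 ≤ C) (h : ∀ x, |f x| ≤ C) : supN f ≤ C :=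
  Real.iSup_le h hC

lemma isBdd_sum {ι : Type*} (s : Finset ι) {G : ι → X → ℝ} (hG : ∀ i ∈ s, IsBdd (G i)) :
    IsBdd (fun x => ∑ i ∈ s, G i x) := by
  have h := (bddFns X).sum_mem hG
  rwa [Finset.sum_fn] at h

lemma abs_evalC_le {f : X → ℝ} (hf : IsBdd f) (c : X →₀ ℤ) :
    |evalC f c| ≤ l1 c * supN f := calc
  |evalC f c| ≤ ∑ x ∈ c.support, |(c x : ℝ)| * |f x| := by
    simpa only [evalC, abs_mul] using Finset.abs_sum_le_sum_abs (fun x => (c x : ℝ) * f x) c.support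
  _ ≤ ∑ x ∈ c.support, |(c x : ℝ)| * supN f :=
    Finset.sum_le_sum fun x _ => mul_le_mul_of_nonneg_left (le_supN hf x) (abs_nonneg _)
  _ = l1 c * supN f := by simp only [l1, Int.cast_sum, Int.cast_abs, Finset.sum_mul]

end Cochains

lemma evalC_dF (K : SSet) (n : ℕ) (f : K _⦋n⦌ × Gma n → ℝ)
    (c : (K _⦋n + 1⦌ × Gma (n + 1)) →₀ ℤ) :
    evalC (dF K n f) c = evalC f (bdryP K n c) := by
  simp only [bdryP, evalC_sum, evalC_zsmul, evalC_mapDomain]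
  simp only [evalC, dF, Finset.mul_sum, Function.comp_apply]
  rw [Finset.sum_comm]
  push_cast
  exact Finset.sum_congr rfl fun i _ => Finset.sum_congr rfl fun x _ => by ring

section Averaging

variable (m : ∀ n : ℕ, ↥(bddFns (Gma n)) →ₗ[ℝ] ℝ) {n : ℕ}

lemma Mext_of_isBdd {g : Gma n → ℝ} (hg : IsBdd g) : Mext m n g = m n ⟨g, hg⟩ :=
  dif_pos hg

lemma Mext_add {g g' : Gma n → ℝ} (hg : IsBdd g) (hg' : IsBdd g') :
    Mext m n (fun t => g t + g' t) = Mext m n g + Mext m n g' := by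
  have h : IsBdd (fun t => g t + g' t) := (bddFns _).add_mem hg hg'
  rw [Mext_of_isBdd m h, Mext_of_isBdd m hg, Mext_of_isBdd m hg', ← map_add]
  rfl

lemma Mext_sub {g g' : Gma n → ℝ} (hg : IsBdd g) (hg' : IsBdd g') :
    Mext m n (fun t => g t - g' t) = Mext m n g - Mext m n g' := by
  have h : IsBdd (fun t => g t - g' t) := (bddFns _).sub_mem hg hg'
  rw [Mext_of_isBdd m h, Mext_of_isBdd m hg, Mext_of_isBdd m hg', ← map_sub]
  rfl

lemma Mext_const_mul (r : ℝ) {g : Gma n → ℝ} (hg : IsBdd g) :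
    Mext m n (fun t => r * g t) = r * Mext m n g := by
  have h : IsBdd (fun t => r * g t) := (bddFns _).smul_mem r hg
  rw [Mext_of_isBdd m h, Mext_of_isBdd m hg, ← smul_eq_mul, ← map_smul]
  rfl

lemma Mext_sum {ι : Type*} (s : Finset ι) {G : ι → Gma n → ℝ} (hG : ∀ i ∈ s, IsBdd (G i)) :
    Mext m n (fun t => ∑ i ∈ s, G i t) = ∑ i ∈ s, Mext m n (G i) := by
  classical
  induction s using Finset.induction_on with
  | empty =>
    have h : IsBdd (fun _ : Gma n => (0 : ℝ)) := (bddFns _).zero_mem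
    rw [Finset.sum_empty]
    simp only [Finset.sum_empty]
    rw [Mext_of_isBdd m h]
    exact map_zero (m n)
  | insert a s ha ih =>
    have hs : ∀ i ∈ s, IsBdd (G i) := fun i hi => hG i (Finset.mem_insert_of_mem hi)
    simp only [Finset.sum_insert ha]
    rw [Mext_add m (hG a (Finset.mem_insert_self a s)) (isBdd_sum s hs), ih hs]

lemma abs_Mext_le (hnorm : ∀ (n : ℕ) (f : ↥(bddFns (Gma n))), |m n f| ≤ supN (f : Gma n → ℝ))
    {g : Gma n → ℝ} (hg : IsBdd g) : |Mext m n g| ≤ supN g := by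
  rw [Mext_of_isBdd m hg]
  exact hnorm n _

lemma Mext_const (hconst : ∀ (n : ℕ) (r : ℝ), m n ⟨fun _ => r, const_mem_bddFns _ r⟩ = r)
    (r : ℝ) : Mext m n (fun _ => r) = r := by
  rw [Mext_of_isBdd m (const_mem_bddFns _ r), hconst]

lemma Mext_comp_faceG
    (hcoherent : ∀ (n : ℕ) (i : Fin (n + 2)) (f : ↥(bddFns (Gma n))),
      m (n + 1) ⟨fun τ => (f : Gma n → ℝ) (faceG i τ), comp_mem_bddFns f.2 (faceG i)⟩
        = m n f)
    (i : Fin (n + 2)) {g : Gma n → ℝ} (hg : IsBdd g) :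
    Mext m (n + 1) (fun τ => g (faceG i τ)) = Mext m n g := by
  rw [Mext_of_isBdd m (comp_mem_bddFns hg (faceG i)), Mext_of_isBdd m hg]
  exact hcoherent n i ⟨g, hg⟩

end Averaging

section Homotopy

variable {m : ∀ n : ℕ, ↥(bddFns (Gma n)) →ₗ[ℝ] ℝ} {K : SSet}
  {k : ∀ n : ℕ, K _⦋n⦌ → Gma n → Gma n → ((K _⦋n + 1⦌ × Gma (n + 1)) →₀ ℤ)} {n : ℕ} {C : ℝ}

lemma abs_evalC_le_of_l1_le (hC : ∀ σ τ τ', (l1 (k n σ τ τ') : ℝ) ≤ C)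
    {f : K _⦋n + 1⦌ × Gma (n + 1) → ℝ} (hf : IsBdd f) (σ : K _⦋n⦌) (τ τ' : Gma n) :
    |evalC f (k n σ τ τ')| ≤ max C 0 * supN f :=
  (abs_evalC_le hf _).trans <|
    mul_le_mul_of_nonneg_right ((hC σ τ τ').trans (le_max_left _ _)) (supN_nonneg f)

lemma isBdd_evalC_of_l1_le (hC : ∀ σ τ τ', (l1 (k n σ τ τ') : ℝ) ≤ C)
    {f : K _⦋n + 1⦌ × Gma (n + 1) → ℝ} (hf : IsBdd f) (σ : K _⦋n⦌) (τ : Gma n) :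
    IsBdd (fun τ' => evalC f (k n σ τ τ')) :=
  ⟨_, abs_evalC_le_of_l1_le hC hf σ τ⟩

lemma isBdd_signed_evalC_faceG (hC : ∀ σ τ τ', (l1 (k n σ τ τ') : ℝ) ≤ C)
    {f : K _⦋n + 1⦌ × Gma (n + 1) → ℝ} (hf : IsBdd f) (σ : K _⦋n + 1⦌) (τ : Gma (n + 1))
    (i : Fin (n + 2)) : IsBdd (fun τ' =>
      (-1 : ℝ) ^ (i : ℕ) * evalC f (k n (K.δ i σ) (faceG i τ) (faceG i τ'))) :=
  (bddFns _).smul_mem _ (comp_mem_bddFns (isBdd_evalC_of_l1_le hC hf _ _) (faceG i))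

lemma hF_add (hC : ∀ σ τ τ', (l1 (k n σ τ τ') : ℝ) ≤ C)
    {f g : K _⦋n + 1⦌ × Gma (n + 1) → ℝ} (hf : IsBdd f) (hg : IsBdd g) :
    hF m K k n (f + g) = hF m K k n f + hF m K k n g := by
  funext x
  simp only [hF, Pi.add_apply, evalC_add_left]
  exact Mext_add m (isBdd_evalC_of_l1_le hC hf _ _) (isBdd_evalC_of_l1_le hC hg _ _)

lemma hF_smul (hC : ∀ σ τ τ', (l1 (k n σ τ τ') : ℝ) ≤ C) (r : ℝ)
    {f : K _⦋n + 1⦌ × Gma (n + 1) → ℝ} (hf : IsBdd f) :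
    hF m K k n (r • f) = r • hF m K k n f := by
  funext x
  simp only [hF, Pi.smul_apply, smul_eq_mul, evalC_smul_left]
  exact Mext_const_mul m r (isBdd_evalC_of_l1_le hC hf _ _)

lemma abs_hF_le
    (hnorm : ∀ (n : ℕ) (f : ↥(bddFns (Gma n))), |m n f| ≤ supN (f : Gma n → ℝ))
    (hC : ∀ σ τ τ', (l1 (k n σ τ τ') : ℝ) ≤ C)
    {f : K _⦋n + 1⦌ × Gma (n + 1) → ℝ} (hf : IsBdd f) (x : K _⦋n⦌ × Gma n) :
    |hF m K k n f x| ≤ max C 0 * supN f :=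
  (abs_Mext_le m hnorm (isBdd_evalC_of_l1_le hC hf _ _)).trans <|
    supN_le (mul_nonneg (le_max_right _ _) (supN_nonneg f)) (abs_evalC_le_of_l1_le hC hf _ _)

lemma sub_pstarF_mstarF_apply
    (hconst : ∀ (n : ℕ) (r : ℝ), m n ⟨fun _ => r, const_mem_bddFns _ r⟩ = r)
    {f : K _⦋n⦌ × Gma n → ℝ} (hf : IsBdd f) (σ : K _⦋n⦌) (τ : Gma n) :
    (f - pstarF K n (mstarF m K n f)) (σ, τ) = Mext m n (fun τ' => f (σ, τ) - f (σ, τ')) := by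
  rw [Mext_sub m (const_mem_bddFns _ _) (comp_mem_bddFns hf (fun τ' => (σ, τ'))),
    Mext_const m hconst]
  rfl

lemma hF_dF_zero
    (hconst : ∀ (n : ℕ) (r : ℝ), m n ⟨fun _ => r, const_mem_bddFns _ r⟩ = r)
    (hk0 : ∀ (σ : K _⦋0⦌) (τ τ' : Gma 0),
      bdryP K 0 (k 0 σ τ τ') = Finsupp.single (σ, τ) 1 - Finsupp.single (σ, τ') 1)
    {f : K _⦋0⦌ × Gma 0 → ℝ} (hf : IsBdd f) :
    hF m K k 0 (dF K 0 f) = f - pstarF K 0 (mstarF m K 0 f) := by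
  funext ⟨σ, τ⟩
  rw [sub_pstarF_mstarF_apply hconst hf]
  simp only [hF, evalC_dF, hk0, evalC_sub, evalC_single_one]

lemma dF_hF_apply
    (hcoherent : ∀ (n : ℕ) (i : Fin (n + 2)) (f : ↥(bddFns (Gma n))),
      m (n + 1) ⟨fun τ => (f : Gma n → ℝ) (faceG i τ), comp_mem_bddFns f.2 (faceG i)⟩
        = m n f)
    (hC : ∀ σ τ τ', (l1 (k n σ τ τ') : ℝ) ≤ C)
    {f : K _⦋n + 1⦌ × Gma (n + 1) → ℝ} (hf : IsBdd f) (σ : K _⦋n + 1⦌) (τ : Gma (n + 1)) :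
    dF K n (hF m K k n f) (σ, τ) = Mext m (n + 1) (fun τ' => ∑ i : Fin (n + 2),
      (-1 : ℝ) ^ (i : ℕ) * evalC f (k n (K.δ i σ) (faceG i τ) (faceG i τ'))) := by
  have hg (i : Fin (n + 2)) := isBdd_evalC_of_l1_le hC hf (K.δ i σ) (faceG i τ)
  rw [Mext_sum m Finset.univ fun i _ => isBdd_signed_evalC_faceG hC hf σ τ i]
  refine Finset.sum_congr rfl fun i _ => ?_
  rw [Mext_const_mul m _ (comp_mem_bddFns (hg i) (faceG i)), Mext_comp_faceG m hcoherent i (hg i)]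
  rfl

lemma hF_dF_succ
    (hconst : ∀ (n : ℕ) (r : ℝ), m n ⟨fun _ => r, const_mem_bddFns _ r⟩ = r)
    (hcoherent : ∀ (n : ℕ) (i : Fin (n + 2)) (f : ↥(bddFns (Gma n))),
      m (n + 1) ⟨fun τ => (f : Gma n → ℝ) (faceG i τ), comp_mem_bddFns f.2 (faceG i)⟩
        = m n f)
    (hk : ∀ (σ : K _⦋n + 1⦌) (τ τ' : Gma (n + 1)),
      bdryP K (n + 1) (k (n + 1) σ τ τ')
        = Finsupp.single (σ, τ) 1 - Finsupp.single (σ, τ') 1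
          - ∑ i : Fin (n + 2), ((-1 : ℤ) ^ (i : ℕ)) •
              k n (K.δ i σ) (faceG i τ) (faceG i τ'))
    (hC : ∀ σ τ τ', (l1 (k n σ τ τ') : ℝ) ≤ C)
    {f : K _⦋n + 1⦌ × Gma (n + 1) → ℝ} (hf : IsBdd f) :
    hF m K k (n + 1) (dF K (n + 1) f)
      = f - pstarF K (n + 1) (mstarF m K (n + 1) f) - dF K n (hF m K k n f) := by
  funext ⟨σ, τ⟩
  have hpair : IsBdd (fun τ' => f (σ, τ) - f (σ, τ')) :=
    (bddFns _).sub_mem (const_mem_bddFns _ _) (comp_mem_bddFns hf (fun τ' => (σ, τ')))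
  have hfaces := isBdd_sum Finset.univ fun i _ => isBdd_signed_evalC_faceG hC hf σ τ i
  rw [Pi.sub_apply, sub_pstarF_mstarF_apply hconst hf, dF_hF_apply hcoherent hC hf,
    ← Mext_sub m hpair hfaces]
  refine congrArg (Mext m (n + 1)) (funext fun τ' => ?_)
  simp only [evalC_dF, hk, evalC_sub, evalC_single_one, evalC_sum, evalC_zsmul]
  push_cast
  rfl

end Homotopy

/-- Given a coherent family of averaging operators `m` and a uniformly
ℓ¹-bounded family of chains `k` with the chain homotopy boundary identities, the operators
`h_{n+1}(f)(σ,τ) = m_n (τ' ↦ f(k_n(σ,τ,τ')))` (and `h_0 = 0`) are bounded linear operators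
forming a cochain homotopy between `p* ∘ m_*` and the identity on bounded cochains:
`f - p*(m_*(f)) = h_{n+1}(∂* f) + ∂*(h_n f)`. -/
theorem homotopy_operators_bounded_and_cochain_homotopy
    (m : ∀ n : ℕ, ↥(bddFns (Gma n)) →ₗ[ℝ] ℝ)
    (hnorm : ∀ (n : ℕ) (f : ↥(bddFns (Gma n))), |m n f| ≤ supN (f : Gma n → ℝ))
    (hconst : ∀ (n : ℕ) (r : ℝ), m n ⟨fun _ => r, const_mem_bddFns _ r⟩ = r)
    (hcoherent : ∀ (n : ℕ) (i : Fin (n + 2)) (f : ↥(bddFns (Gma n))),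
      m (n + 1) ⟨fun τ => (f : Gma n → ℝ) (faceG i τ), comp_mem_bddFns f.2 (faceG i)⟩
        = m n f)
    (K : SSet)
    (k : ∀ n : ℕ, K _⦋n⦌ → Gma n → Gma n → ((K _⦋n + 1⦌ × Gma (n + 1)) →₀ ℤ))
    (hk_bdd : ∀ n : ℕ, ∃ C : ℝ, ∀ (σ : K _⦋n⦌) (τ τ' : Gma n), ((l1 (k n σ τ τ') : ℤ) : ℝ) ≤ C)
    (hk0 : ∀ (σ : K _⦋0⦌) (τ τ' : Gma 0),
      bdryP K 0 (k 0 σ τ τ') = Finsupp.single (σ, τ) 1 - Finsupp.single (σ, τ') 1)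
    (hk : ∀ (n : ℕ) (σ : K _⦋n + 1⦌) (τ τ' : Gma (n + 1)),
      bdryP K (n + 1) (k (n + 1) σ τ τ')
        = Finsupp.single (σ, τ) 1 - Finsupp.single (σ, τ') 1
          - ∑ i : Fin (n + 2), ((-1 : ℤ) ^ (i : ℕ)) •
              k n (K.δ i σ) (faceG i τ) (faceG i τ')) :
    (∀ n : ℕ,
      (∀ f g : (K _⦋n + 1⦌ × Gma (n + 1)) → ℝ, IsBdd f → IsBdd g →
        hF m K k n (f + g) = hF m K k n f + hF m K k n g) ∧
      (∀ (r : ℝ) (f : (K _⦋n + 1⦌ × Gma (n + 1)) → ℝ), IsBdd f →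
        hF m K k n (r • f) = r • hF m K k n f) ∧
      (∃ C : ℝ, ∀ f : (K _⦋n + 1⦌ × Gma (n + 1)) → ℝ, IsBdd f →
        IsBdd (hF m K k n f) ∧ supN (hF m K k n f) ≤ C * supN f)) ∧
    (∀ f : (K _⦋0⦌ × Gma 0) → ℝ, IsBdd f →
      f - pstarF K 0 (mstarF m K 0 f) = hF m K k 0 (dF K 0 f)) ∧
    (∀ (n : ℕ) (f : (K _⦋n + 1⦌ × Gma (n + 1)) → ℝ), IsBdd f →
      f - pstarF K (n + 1) (mstarF m K (n + 1) f)
        = hF m K k (n + 1) (dF K (n + 1) f) + dF K n (hF m K k n f)) := by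
  refine ⟨fun n => ?_, fun f hf => (hF_dF_zero hconst hk0 hf).symm, fun n f hf => ?_⟩
  · obtain ⟨C, hC⟩ := hk_bdd n
    refine ⟨fun f g hf hg => hF_add hC hf hg, fun r f hf => hF_smul hC r hf, max C 0,
      fun f hf => ?_⟩
    have hbound := abs_hF_le hnorm hC hf
    exact ⟨⟨_, hbound⟩, supN_le (mul_nonneg (le_max_right _ _) (supN_nonneg f)) hbound⟩
  · obtain ⟨C, hC⟩ := hk_bdd n
    rw [hF_dF_succ hconst hcoherent (hk n) hC hf, sub_add_cancel]
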